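/- Let R > 0, let h₁, h₂ ∈ C¹(B_R) and let u ∈ C²(B_R) solve Δu + h₁ e^{u} − h₂ e^{−u} = 0 in B_R ⊂ ℝ². Then for every 0 < r < R the Pohozaev-type identity holds: ∫_{B_r} (x·∇h₁) e^{u} dx + ∫_{B_r} (x·∇h₂) e^{−u} dx + 2 ∫_{B_r} (h₁ e^{u} + h₂ e^{−u}) dx = r ∫_{∂B_r} (h₁ e^{u} + h₂ e^{−u}) dσ + r ∫_{∂B_r} (|∂_ν u|² − ½ |∇u|²) dσ, where ν is the outward unit normal on ∂B_r and dσ the arc-length measure. -/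

import Mathlib

open MeasureTheory Metric Filter Set

noncomputable section

abbrev E2 := EuclideanSpace ℝ (Fin 2)

/-- The Laplacian of a function `u : ℝ² → ℝ`. -/
def lap (u : E2 → ℝ) (x : E2) : ℝ :=
  ∑ i : Fin 2, fderiv ℝ (fun y => fderiv ℝ u y (EuclideanSpace.single i 1)) x
    (EuclideanSpace.single i 1)

/-- The point `(r cos θ, r sin θ)` on the circle of radius `r` centered at the origin. -/
def circ (r θ : ℝ) : E2 := (WithLp.equiv 2 (Fin 2 → ℝ)).symm ![r * Real.cos θ, r * Real.sin θ]

/-- Spherical average `ū(r) = (1/(2πr)) ∫_{∂B_r} u dσ`, via arc-length parametrization. -/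
def sphAvg (f : E2 → ℝ) (r : ℝ) : ℝ :=
  (2 * Real.pi)⁻¹ * ∫ θ in (0:ℝ)..(2 * Real.pi), f (circ r θ)

/-- Local mass `σ₁ᵏ(r) = (1/(2π)) ∫_{B_r} h₁ᵏ e^{u_k}`. -/
def mass1 (u h : ℕ → E2 → ℝ) (k : ℕ) (r : ℝ) : ℝ :=
  (2 * Real.pi)⁻¹ * ∫ x in ball (0:E2) r, h k x * Real.exp (u k x)

/-- Local mass `σ₂ᵏ(r) = (1/(2π)) ∫_{B_r} h₂ᵏ e^{-u_k}`. -/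
def mass2 (u h : ℕ → E2 → ℝ) (k : ℕ) (r : ℝ) : ℝ :=
  (2 * Real.pi)⁻¹ * ∫ x in ball (0:E2) r, h k x * Real.exp (-(u k x))

/-- The standing blow-up assumptions for the sinh-Gordon equation in `B₁ ⊂ ℝ²`. -/
def BlowUpSetup (u h₁ h₂ : ℕ → E2 → ℝ) : Prop :=
  (∀ k, ContDiffOn ℝ 2 (u k) (ball 0 1)) ∧
  (∀ k, ∀ x ∈ ball (0:E2) 1,
      lap (u k) x + h₁ k x * Real.exp (u k x) - h₂ k x * Real.exp (-(u k x)) = 0) ∧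
  (∀ k, IntegrableOn (fun x => h₁ k x * Real.exp (u k x)) (ball (0:E2) 1)) ∧
  (∀ k, IntegrableOn (fun x => h₂ k x * Real.exp (-(u k x))) (ball (0:E2) 1)) ∧
  (∃ C : ℝ, 0 < C ∧
    (∀ k, ContDiffOn ℝ 3 (h₁ k) (ball 0 1) ∧ ContDiffOn ℝ 3 (h₂ k) (ball 0 1)) ∧
    (∀ k, ∀ x ∈ ball (0:E2) 1,
        C⁻¹ ≤ h₁ k x ∧ h₁ k x ≤ C ∧ C⁻¹ ≤ h₂ k x ∧ h₂ k x ≤ C) ∧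
    (∀ k, ∀ x ∈ ball (0:E2) 1, ∀ j : ℕ, j ≤ 3 →
        ‖iteratedFDerivWithin ℝ j (h₁ k) (ball 0 1) x‖ ≤ C ∧
        ‖iteratedFDerivWithin ℝ j (h₂ k) (ball 0 1) x‖ ≤ C) ∧
    (∀ k, ∀ x ∈ sphere (0:E2) 1, ∀ y ∈ sphere (0:E2) 1, |u k x - u k y| ≤ C) ∧
    (∀ k, (∫ x in ball (0:E2) 1, h₁ k x * Real.exp (u k x)) ≤ C) ∧
    (∀ k, (∫ x in ball (0:E2) 1, h₂ k x * Real.exp (-(u k x))) ≤ C)) ∧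
  (∀ K : Set E2, IsCompact K → K ⊆ ball 0 1 \ {0} → ∃ CK : ℝ, ∀ k, ∀ x ∈ K, |u k x| ≤ CK) ∧
  (∀ M : ℝ, ∀ᶠ k in atTop, ∃ x ∈ ball (0:E2) 1, M < |u k x|)

/-- `σ` is the iterated limit `lim_{δ→0⁺} lim_{k→∞} F k δ`. -/
def IsBlowUpMass (F : ℕ → ℝ → ℝ) (σ : ℝ) : Prop :=
  ∃ S : ℝ → ℝ, (∀ δ : ℝ, 0 < δ → δ < 1 → Tendsto (fun k => F k δ) atTop (nhds (S δ))) ∧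
    Tendsto S (nhdsWithin 0 (Ioi 0)) (nhds σ)

/-- The properties of the bubbling set `Σ_k` produced by the selection process. -/
def SelectionSet (u : ℕ → E2 → ℝ) (Sk : ℕ → Finset E2) : Prop :=
  (∀ k, (Sk k).Nonempty) ∧
  (∀ ε : ℝ, 0 < ε → ∀ᶠ k in atTop, ∀ x ∈ Sk k, ‖x‖ < ε) ∧
  (∃ C₁ : ℝ, 0 < C₁ ∧ ∀ k, ∀ x ∈ ball (0:E2) 1,
      |u k x| + 2 * Real.log (infDist x (↑(Sk k) : Set E2)) ≤ C₁)

/-- Convergence in `C²_loc(ℝ²)`. -/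
def ConvC2loc (w : ℕ → E2 → ℝ) (v : E2 → ℝ) : Prop :=
  ∀ K : Set E2, IsCompact K → ∀ j : ℕ, j ≤ 2 →
    TendstoUniformlyOn (fun k y => iteratedFDeriv ℝ j (w k) y) (iteratedFDeriv ℝ j v) atTop K

/-- Uniform convergence to `-∞` on every compact subset of `ℝ²`. -/
def TendsNegInfLoc (w : ℕ → E2 → ℝ) : Prop :=
  ∀ K : Set E2, IsCompact K → ∀ M : ℝ, ∀ᶠ k in atTop, ∀ y ∈ K, w k y ≤ -M


/-!
In polar coordinates `x = circ ρ θ`, with `u_r, u_τ` the derivatives of `u` along `circ 1 θ` and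
`circ 1 (θ + π / 2)`, the Pohozaev density satisfies `ρ · density = ∂_ρ P + ∂_θ Q` for
`P = ρ²/2 (u_r² - u_τ²) + ρ² (h₁ e^u + h₂ e^{-u})` and `Q = ρ u_r u_τ`: these are the polar
components of the Pohozaev field `(x·∇u)∇u - ½|∇u|² x + (h₁ e^u + h₂ e^{-u}) x`, and the identity
uses the equation together with the symmetry of `D²u`. Green's theorem on `[0, r] × [-π, π]` then
leaves only the edge `ρ = r`: the edges `θ = ±π` cancel by periodicity and `P(0, θ) = 0`. Finally
`P(r, θ) = r² (h₁ e^u + h₂ e^{-u} + u_r² - ½ |∇u|²)` since `|∇u|² = u_r² + u_τ²`.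
-/

open Real Topology

lemma circ_eq_smul_add_smul (ρ θ : ℝ) :
    circ ρ θ =
      (ρ * cos θ) • EuclideanSpace.single 0 1 + (ρ * sin θ) • EuclideanSpace.single 1 1 := by
  ext i
  fin_cases i <;> simp [circ]

lemma circ_eq_smul (ρ θ : ℝ) : circ ρ θ = ρ • circ 1 θ := by
  simp [circ_eq_smul_add_smul, smul_smul, smul_add]

lemma norm_circ (ρ θ : ℝ) : ‖circ ρ θ‖ = |ρ| := by
  rw [← sqrt_sq_eq_abs, EuclideanSpace.norm_eq]
  congr 1
  simp [circ_eq_smul_add_smul, Fin.sum_univ_two, mul_pow]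
  linear_combination ρ ^ 2 * sin_sq_add_cos_sq θ

lemma circ_mem_ball {R ρ : ℝ} (hρ : |ρ| < R) (θ : ℝ) : circ ρ θ ∈ ball (0 : E2) R := by
  rwa [mem_ball_zero_iff, norm_circ]

lemma circ_add_two_pi (ρ θ : ℝ) : circ ρ (θ + 2 * π) = circ ρ θ := by
  simp [circ]

lemma circ_add_pi (ρ θ : ℝ) : circ ρ (θ + π) = -circ ρ θ := by
  ext i
  fin_cases i <;> simp [circ, cos_add, sin_add]

lemma continuous_circ : Continuous fun z : ℝ × ℝ => circ z.1 z.2 := by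
  simp only [circ_eq_smul_add_smul]
  fun_prop

lemma differentiable_circ : Differentiable ℝ fun z : ℝ × ℝ => circ z.1 z.2 := by
  simp only [circ_eq_smul_add_smul]
  fun_prop

lemma continuous_circ_angle (ρ : ℝ) : Continuous (circ ρ) :=
  continuous_circ.comp (continuous_const.prodMk continuous_id)

lemma hasDerivAt_circ_radius (ρ θ : ℝ) : HasDerivAt (circ · θ) (circ 1 θ) ρ := by
  rw [show (circ · θ) = fun s => s • circ 1 θ from funext fun s => circ_eq_smul s θ]
  simpa using (hasDerivAt_id ρ).smul_const (circ 1 θ)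

lemma hasDerivAt_circ_angle (ρ θ : ℝ) : HasDerivAt (circ ρ) (ρ • circ 1 (θ + π / 2)) θ := by
  have h := (((hasDerivAt_cos θ).const_mul ρ).smul_const
    (EuclideanSpace.single (0 : Fin 2) (1 : ℝ))).fun_add
    (((hasDerivAt_sin θ).const_mul ρ).smul_const (EuclideanSpace.single (1 : Fin 2) (1 : ℝ)))
  rw [show circ ρ = _ from funext (circ_eq_smul_add_smul ρ)]
  refine h.congr_deriv ?_
  rw [circ_eq_smul_add_smul, cos_add_pi_div_two, sin_add_pi_div_two, smul_add, smul_smul, smul_smul]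
  ring_nf

open scoped RealInnerProductSpace in
lemma OrthonormalBasis.sum_sq_apply_eq_norm_sq {ι E : Type*} [Fintype ι] [NormedAddCommGroup E]
    [InnerProductSpace ℝ E] [CompleteSpace E] (b : OrthonormalBasis ι ℝ E) (L : E →L[ℝ] ℝ) :
    ∑ i, L (b i) ^ 2 = ‖L‖ ^ 2 := by
  set y := (InnerProductSpace.toDual ℝ E).symm L
  have hL : ∀ v, L v = ⟪v, y⟫ := fun v => by
    rw [real_inner_comm, InnerProductSpace.toDual_symm_apply]
  rw [← (InnerProductSpace.toDual ℝ E).symm.norm_map L, ← b.sum_sq_inner_right]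
  simp only [hL, y]

lemma map_circ_one (L : E2 →L[ℝ] ℝ) (θ : ℝ) :
    L (circ 1 θ) =
      cos θ * L (EuclideanSpace.single 0 1) + sin θ * L (EuclideanSpace.single 1 1) := by
  simp [circ_eq_smul_add_smul]

lemma apply_circ_sq_add_apply_circ_sq (L : E2 →L[ℝ] ℝ) (θ : ℝ) :
    L (circ 1 θ) ^ 2 + L (circ 1 (θ + π / 2)) ^ 2 = ‖L‖ ^ 2 := by
  rw [← (EuclideanSpace.basisFun (Fin 2) ℝ).sum_sq_apply_eq_norm_sq, Fin.sum_univ_two,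
    map_circ_one, map_circ_one, cos_add_pi_div_two, sin_add_pi_div_two]
  simp only [EuclideanSpace.basisFun_apply]
  linear_combination (L (EuclideanSpace.single 0 1) ^ 2 + L (EuclideanSpace.single 1 1) ^ 2) *
    sin_sq_add_cos_sq θ

lemma apply_circ_circ_add_apply_circ_circ (B : E2 →L[ℝ] E2 →L[ℝ] ℝ) (θ : ℝ) :
    B (circ 1 θ) (circ 1 θ) + B (circ 1 (θ + π / 2)) (circ 1 (θ + π / 2)) =
      ∑ i : Fin 2, B (EuclideanSpace.single i 1) (EuclideanSpace.single i 1) := by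
  simp only [Fin.sum_univ_two, circ_eq_smul_add_smul, one_mul, map_add, map_smul, add_apply,
    smul_apply, smul_eq_mul, cos_add_pi_div_two, sin_add_pi_div_two]
  linear_combination (B (EuclideanSpace.single 0 1) (EuclideanSpace.single 0 1) +
    B (EuclideanSpace.single 1 1) (EuclideanSpace.single 1 1)) * sin_sq_add_cos_sq θ

lemma lap_eq_apply_circ {u : E2 → ℝ} {x : E2} (hu : DifferentiableAt ℝ (fderiv ℝ u) x) (θ : ℝ) :
    lap u x = fderiv ℝ (fderiv ℝ u) x (circ 1 θ) (circ 1 θ) +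
      fderiv ℝ (fderiv ℝ u) x (circ 1 (θ + π / 2)) (circ 1 (θ + π / 2)) := by
  rw [apply_circ_circ_add_apply_circ_circ, lap]
  congr 1 with i
  set v : E2 := EuclideanSpace.single i 1
  have h : HasFDerivAt (fun y => fderiv ℝ u y v)
      ((ContinuousLinearMap.apply ℝ ℝ v).comp (fderiv ℝ (fderiv ℝ u) x)) x :=
    (ContinuousLinearMap.apply ℝ ℝ v).hasFDerivAt.comp x hu.hasFDerivAt
  rw [h.fderiv]
  rfl

def euclideanEquivProd : E2 ≃ᵐ ℝ × ℝ :=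
  (MeasurableEquiv.toLp 2 (Fin 2 → ℝ)).symm.trans MeasurableEquiv.finTwoArrow

lemma measurePreserving_euclideanEquivProd : MeasurePreserving euclideanEquivProd :=
  (volume_preserving_finTwoArrow ℝ).comp
    (EuclideanSpace.volume_preserving_symm_measurableEquiv_toLp (Fin 2))

lemma euclideanEquivProd_symm_polarCoord_symm (z : ℝ × ℝ) :
    euclideanEquivProd.symm (polarCoord.symm z) = circ z.1 z.2 := by
  rw [MeasurableEquiv.symm_apply_eq]
  simp [euclideanEquivProd, circ, MeasurableEquiv.finTwoArrow, polarCoord_symm_apply]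

lemma integral_ball_eq_integral_polar (r : ℝ) (g : E2 → ℝ) :
    ∫ x in ball (0 : E2) r, g x = ∫ z in Icc (0, -π) (r, π), z.1 * g (circ z.1 z.2) := by
  have hpolar : ∀ z ∈ polarCoord.target, z.1 • (ball (0 : E2) r).indicator g
      (euclideanEquivProd.symm (polarCoord.symm z)) =
      {z : ℝ × ℝ | z.1 < r}.indicator (fun z => z.1 * g (circ z.1 z.2)) z := by
    rintro ⟨ρ, θ⟩ hz
    have hρ : 0 < ρ := hz.1
    rw [euclideanEquivProd_symm_polarCoord_symm, smul_eq_mul]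
    by_cases hρr : ρ < r
    · rw [indicator_of_mem (circ_mem_ball (by rwa [abs_of_pos hρ]) θ),
        indicator_of_mem (s := {z : ℝ × ℝ | z.1 < r}) hρr]
    · rw [indicator_of_notMem (by rwa [mem_ball_zero_iff, norm_circ, abs_of_pos hρ]),
        indicator_of_notMem (s := {z : ℝ × ℝ | z.1 < r}) hρr, mul_zero]
  have htarget : polarCoord.target ∩ {z : ℝ × ℝ | z.1 < r} = Ioo 0 r ×ˢ Ioo (-π) π := by
    ext ⟨ρ, θ⟩
    simp only [polarCoord_target, mem_inter_iff, mem_prod, mem_Ioi, mem_Ioo, mem_ofPred_eq]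
    tauto
  calc ∫ x in ball (0 : E2) r, g x
      = ∫ z, (ball (0 : E2) r).indicator g (euclideanEquivProd.symm z) := by
        rw [← integral_indicator measurableSet_ball, (measurePreserving_euclideanEquivProd.symm
          _).integral_comp euclideanEquivProd.symm.measurableEmbedding]
    _ = ∫ z in Ioo 0 r ×ˢ Ioo (-π) π, z.1 * g (circ z.1 z.2) := by
        rw [← integral_comp_polarCoord_symm, setIntegral_congr_fun
          polarCoord.open_target.measurableSet hpolar, setIntegral_indicator
          (measurableSet_lt measurable_fst measurable_const), htarget]
    _ = ∫ z in Icc (0, -π) (r, π), z.1 * g (circ z.1 z.2) := by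
        rw [Icc_prod_eq, Measure.volume_eq_prod,
          setIntegral_congr_set (Measure.set_prod_ae_eq Ioo_ae_eq_Icc Ioo_ae_eq_Icc)]

section PartialDerivatives

variable {F : Type*} [NormedAddCommGroup F] [NormedSpace ℝ F] {f : ℝ × ℝ → F} {z : ℝ × ℝ} {a : F}

lemma DifferentiableAt.fderiv_apply_one_zero (hf : DifferentiableAt ℝ f z)
    (h : HasDerivAt (fun s => f (s, z.2)) a z.1) : fderiv ℝ f z (1, 0) = a := by
  have hline : HasDerivAt (fun s : ℝ => (s, z.2)) (1, 0) z.1 :=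
    (hasDerivAt_id z.1).prodMk (hasDerivAt_const z.1 z.2)
  exact (hf.hasFDerivAt.comp_hasDerivAt z.1 hline).unique h

lemma DifferentiableAt.fderiv_apply_zero_one (hf : DifferentiableAt ℝ f z)
    (h : HasDerivAt (fun t => f (z.1, t)) a z.2) : fderiv ℝ f z (0, 1) = a := by
  have hline : HasDerivAt (fun t : ℝ => (z.1, t)) (0, 1) z.2 :=
    (hasDerivAt_const z.2 z.1).prodMk (hasDerivAt_id z.2)
  exact (hf.hasFDerivAt.comp_hasDerivAt z.2 hline).unique h

end PartialDerivatives

section FieldsAlongCircles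

variable {F : Type*} [NormedAddCommGroup F] [NormedSpace ℝ F] {g : E2 → E2 →L[ℝ] F} {ρ θ : ℝ}

lemma hasDerivAt_apply_circ_radius (hg : DifferentiableAt ℝ g (circ ρ θ)) (v : E2) :
    HasDerivAt (fun s => g (circ s θ) v) (fderiv ℝ g (circ ρ θ) (circ 1 θ) v) ρ := by
  have hcomp : HasDerivAt (fun s => g (circ s θ)) (fderiv ℝ g (circ ρ θ) (circ 1 θ)) ρ :=
    hg.hasFDerivAt.comp_hasDerivAt ρ (hasDerivAt_circ_radius ρ θ)
  simpa using hcomp.clm_apply (hasDerivAt_const ρ v)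

lemma hasDerivAt_apply_circ_angle (hg : DifferentiableAt ℝ g (circ ρ θ)) (φ : ℝ) :
    HasDerivAt (fun t => g (circ ρ t) (circ 1 (t + φ)))
      (ρ • fderiv ℝ g (circ ρ θ) (circ 1 (θ + π / 2)) (circ 1 (θ + φ)) +
        g (circ ρ θ) (circ 1 (θ + φ + π / 2))) θ := by
  have hdir : HasDerivAt (fun t => circ 1 (t + φ)) (circ 1 (θ + φ + π / 2)) θ := by
    simpa only [one_smul] using (hasDerivAt_circ_angle 1 (θ + φ)).comp_add_const θ φ
  have h := (hg.hasFDerivAt.comp_hasDerivAt θ (hasDerivAt_circ_angle ρ θ)).clm_apply hdir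
  rwa [map_smul, smul_apply] at h

end FieldsAlongCircles

/-- `ρ V_r` and `V_θ` at `x = circ ρ θ` for the Rellich field `V = (x·∇u)∇u - ½|∇u|² x`, in the
frame `circ 1 θ`, `circ 1 (θ + π / 2)`; thus `ρ div V = ∂_ρ (ρ V_r) + ∂_θ V_θ`. -/
def rellichRadialFlux (u : E2 → ℝ) (z : ℝ × ℝ) : ℝ :=
  z.1 ^ 2 / 2 * (fderiv ℝ u (circ z.1 z.2) (circ 1 z.2) ^ 2 -
    fderiv ℝ u (circ z.1 z.2) (circ 1 (z.2 + π / 2)) ^ 2)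

def rellichAngularFlux (u : E2 → ℝ) (z : ℝ × ℝ) : ℝ :=
  z.1 * (fderiv ℝ u (circ z.1 z.2) (circ 1 z.2) *
    fderiv ℝ u (circ z.1 z.2) (circ 1 (z.2 + π / 2)))

section Rellich

variable {u : E2 → ℝ} {z : ℝ × ℝ}

lemma differentiableAt_fderiv_circ_apply (hu : DifferentiableAt ℝ (fderiv ℝ u) (circ z.1 z.2))
    (φ : ℝ) :
    DifferentiableAt ℝ (fun z : ℝ × ℝ => fderiv ℝ u (circ z.1 z.2) (circ 1 (z.2 + φ))) z :=
  (hu.comp z (differentiable_circ z)).clm_apply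
    ((differentiable_circ.comp ((differentiable_const 1).prodMk
      (differentiable_snd.add_const φ))) z)

lemma differentiableAt_rellichRadialFlux
    (hu : DifferentiableAt ℝ (fderiv ℝ u) (circ z.1 z.2)) :
    DifferentiableAt ℝ (rellichRadialFlux u) z := by
  have hr := differentiableAt_fderiv_circ_apply hu 0
  have ht := differentiableAt_fderiv_circ_apply hu (π / 2)
  simp only [add_zero] at hr
  unfold rellichRadialFlux
  fun_prop

lemma differentiableAt_rellichAngularFlux
    (hu : DifferentiableAt ℝ (fderiv ℝ u) (circ z.1 z.2)) :
    DifferentiableAt ℝ (rellichAngularFlux u) z := by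
  have hr := differentiableAt_fderiv_circ_apply hu 0
  have ht := differentiableAt_fderiv_circ_apply hu (π / 2)
  simp only [add_zero] at hr
  unfold rellichAngularFlux
  fun_prop

lemma rellich_polar {ρ θ : ℝ} (hu : ContDiffAt ℝ 2 u (circ ρ θ)) :
    fderiv ℝ (rellichRadialFlux u) (ρ, θ) (1, 0) + fderiv ℝ (rellichAngularFlux u) (ρ, θ) (0, 1) =
      ρ ^ 2 * fderiv ℝ u (circ ρ θ) (circ 1 θ) * lap u (circ ρ θ) := by
  have hd : DifferentiableAt ℝ (fderiv ℝ u) (circ ρ θ) :=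
    (hu.fderiv_right (m := 1) le_rfl).differentiableAt one_ne_zero
  have hsymm := hu.isSymmSndFDerivAt (by simp)
  have hω_radius := hasDerivAt_apply_circ_radius hd (circ 1 θ)
  have hτ_radius := hasDerivAt_apply_circ_radius hd (circ 1 (θ + π / 2))
  have hω_angle := hasDerivAt_apply_circ_angle hd 0
  have hτ_angle := hasDerivAt_apply_circ_angle hd (π / 2)
  simp only [add_zero, add_assoc, add_halves, circ_add_pi, map_neg, smul_eq_mul]
    at hω_angle hτ_angle
  rw [lap_eq_apply_circ hd θ]
  set H := fderiv ℝ (fderiv ℝ u) (circ ρ θ)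
  set ω := circ 1 θ
  set τ := circ 1 (θ + π / 2)
  have hradial : HasDerivAt (fun s => rellichRadialFlux u (s, θ))
      (ρ * (fderiv ℝ u (circ ρ θ) ω ^ 2 - fderiv ℝ u (circ ρ θ) τ ^ 2) +
        ρ ^ 2 * (fderiv ℝ u (circ ρ θ) ω * H ω ω - fderiv ℝ u (circ ρ θ) τ * H ω τ)) ρ :=
    (((hasDerivAt_pow 2 ρ).div_const 2).fun_mul
      ((hω_radius.fun_pow 2).fun_sub (hτ_radius.fun_pow 2))).congr_deriv (by ring)
  have hangular : HasDerivAt (fun t => rellichAngularFlux u (ρ, t))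
      (ρ * ((ρ * H τ ω + fderiv ℝ u (circ ρ θ) τ) * fderiv ℝ u (circ ρ θ) τ +
        fderiv ℝ u (circ ρ θ) ω * (ρ * H τ τ - fderiv ℝ u (circ ρ θ) ω))) θ :=
    ((hω_angle.fun_mul hτ_angle).const_mul ρ).congr_deriv (by ring)
  rw [(differentiableAt_rellichRadialFlux (z := (ρ, θ)) hd).fderiv_apply_one_zero hradial,
    (differentiableAt_rellichAngularFlux (z := (ρ, θ)) hd).fderiv_apply_zero_one hangular]
  linear_combination -ρ ^ 2 * fderiv ℝ u (circ ρ θ) τ * hsymm ω τ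

end Rellich

def sinhPotential (u h₁ h₂ : E2 → ℝ) (x : E2) : ℝ :=
  h₁ x * exp (u x) + h₂ x * exp (-(u x))

def pohozaevDensity (u h₁ h₂ : E2 → ℝ) (x : E2) : ℝ :=
  fderiv ℝ h₁ x x * exp (u x) + fderiv ℝ h₂ x x * exp (-(u x)) + 2 * sinhPotential u h₁ h₂ x

def pohozaevRadialFlux (u h₁ h₂ : E2 → ℝ) (z : ℝ × ℝ) : ℝ :=
  rellichRadialFlux u z + z.1 ^ 2 * sinhPotential u h₁ h₂ (circ z.1 z.2)

section Potential

variable {u h₁ h₂ : E2 → ℝ} {ρ θ : ℝ}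

lemma differentiableAt_sq_mul_sinhPotential_circ {z : ℝ × ℝ}
    (hu : DifferentiableAt ℝ u (circ z.1 z.2)) (hh₁ : DifferentiableAt ℝ h₁ (circ z.1 z.2))
    (hh₂ : DifferentiableAt ℝ h₂ (circ z.1 z.2)) :
    DifferentiableAt ℝ (fun z : ℝ × ℝ => z.1 ^ 2 * sinhPotential u h₁ h₂ (circ z.1 z.2)) z := by
  have hc := differentiable_circ z
  have := hu.comp z hc
  have := hh₁.comp z hc
  have := hh₂.comp z hc
  unfold sinhPotential
  fun_prop

lemma hasDerivAt_sq_mul_sinhPotential_circ (hu : DifferentiableAt ℝ u (circ ρ θ))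
    (hh₁ : DifferentiableAt ℝ h₁ (circ ρ θ)) (hh₂ : DifferentiableAt ℝ h₂ (circ ρ θ)) :
    HasDerivAt (fun s => s ^ 2 * sinhPotential u h₁ h₂ (circ s θ))
      (ρ * pohozaevDensity u h₁ h₂ (circ ρ θ) + ρ ^ 2 * fderiv ℝ u (circ ρ θ) (circ 1 θ) *
        (h₁ (circ ρ θ) * exp (u (circ ρ θ)) - h₂ (circ ρ θ) * exp (-(u (circ ρ θ))))) ρ := by
  have hc := hasDerivAt_circ_radius ρ θ
  have hu' : HasDerivAt (fun s => u (circ s θ)) (fderiv ℝ u (circ ρ θ) (circ 1 θ)) ρ :=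
    hu.hasFDerivAt.comp_hasDerivAt ρ hc
  have hh₁' : HasDerivAt (fun s => h₁ (circ s θ)) (fderiv ℝ h₁ (circ ρ θ) (circ 1 θ)) ρ :=
    hh₁.hasFDerivAt.comp_hasDerivAt ρ hc
  have hh₂' : HasDerivAt (fun s => h₂ (circ s θ)) (fderiv ℝ h₂ (circ ρ θ) (circ 1 θ)) ρ :=
    hh₂.hasFDerivAt.comp_hasDerivAt ρ hc
  have h := (hasDerivAt_pow 2 ρ).fun_mul
    ((hh₁'.fun_mul hu'.exp).fun_add (hh₂'.fun_mul hu'.fun_neg.exp))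
  refine h.congr_deriv ?_
  -- `x · ∇h = ρ ∂ᵣh` at `x = circ ρ θ`
  simp only [pohozaevDensity, sinhPotential, circ_eq_smul ρ θ, map_smul, smul_eq_mul]
  ring

lemma differentiableAt_pohozaevRadialFlux {z : ℝ × ℝ} (hu : ContDiffAt ℝ 2 u (circ z.1 z.2))
    (hh₁ : DifferentiableAt ℝ h₁ (circ z.1 z.2)) (hh₂ : DifferentiableAt ℝ h₂ (circ z.1 z.2)) :
    DifferentiableAt ℝ (pohozaevRadialFlux u h₁ h₂) z :=
  (differentiableAt_rellichRadialFlux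
    ((hu.fderiv_right (m := 1) le_rfl).differentiableAt one_ne_zero)).add
    (differentiableAt_sq_mul_sinhPotential_circ (hu.differentiableAt two_ne_zero) hh₁ hh₂)

lemma pohozaev_polar (hu : ContDiffAt ℝ 2 u (circ ρ θ)) (hh₁ : DifferentiableAt ℝ h₁ (circ ρ θ))
    (hh₂ : DifferentiableAt ℝ h₂ (circ ρ θ))
    (heq : lap u (circ ρ θ) + h₁ (circ ρ θ) * exp (u (circ ρ θ)) -
      h₂ (circ ρ θ) * exp (-(u (circ ρ θ))) = 0) :
    fderiv ℝ (pohozaevRadialFlux u h₁ h₂) (ρ, θ) (1, 0) +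
        fderiv ℝ (rellichAngularFlux u) (ρ, θ) (0, 1) =
      ρ * pohozaevDensity u h₁ h₂ (circ ρ θ) := by
  have hrellich := differentiableAt_rellichRadialFlux (z := (ρ, θ))
    ((hu.fderiv_right (m := 1) le_rfl).differentiableAt one_ne_zero)
  have hpot := differentiableAt_sq_mul_sinhPotential_circ (z := (ρ, θ))
    (hu.differentiableAt two_ne_zero) hh₁ hh₂
  have hpot' := hpot.fderiv_apply_one_zero
    (hasDerivAt_sq_mul_sinhPotential_circ (hu.differentiableAt two_ne_zero) hh₁ hh₂)
  unfold pohozaevRadialFlux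
  rw [fderiv_fun_add hrellich hpot, add_apply, hpot', add_right_comm, rellich_polar hu]
  dsimp only
  linear_combination ρ ^ 2 * fderiv ℝ u (circ ρ θ) (circ 1 θ) * heq

end Potential

lemma periodic_rellichAngularFlux (u : E2 → ℝ) (ρ : ℝ) :
    Function.Periodic (fun θ => rellichAngularFlux u (ρ, θ)) (2 * π) := fun θ => by
  simp only [rellichAngularFlux, add_right_comm θ (2 * π), circ_add_two_pi]

lemma periodic_pohozaevRadialFlux (u h₁ h₂ : E2 → ℝ) (ρ : ℝ) :
    Function.Periodic (fun θ => pohozaevRadialFlux u h₁ h₂ (ρ, θ)) (2 * π) := fun θ => by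
  simp only [pohozaevRadialFlux, rellichRadialFlux, add_right_comm θ (2 * π), circ_add_two_pi]

lemma pohozaevRadialFlux_zero (u h₁ h₂ : E2 → ℝ) (θ : ℝ) :
    pohozaevRadialFlux u h₁ h₂ (0, θ) = 0 := by
  simp [pohozaevRadialFlux, rellichRadialFlux]

lemma pohozaevRadialFlux_eq (u h₁ h₂ : E2 → ℝ) (ρ θ : ℝ) :
    pohozaevRadialFlux u h₁ h₂ (ρ, θ) = ρ ^ 2 * sinhPotential u h₁ h₂ (circ ρ θ) +
      ρ ^ 2 * (fderiv ℝ u (circ ρ θ) (circ 1 θ) ^ 2 - 1 / 2 * ‖fderiv ℝ u (circ ρ θ)‖ ^ 2) := by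
  rw [← apply_circ_sq_add_apply_circ_sq (fderiv ℝ u (circ ρ θ)) θ, pohozaevRadialFlux,
    rellichRadialFlux]
  ring

lemma ContDiffOn.continuousOn_fderiv_apply_self {E F : Type*} [NormedAddCommGroup E]
    [NormedSpace ℝ E] [NormedAddCommGroup F] [NormedSpace ℝ F] {s : Set E} {f : E → F}
    (hf : ContDiffOn ℝ 1 f s) (hs : IsOpen s) : ContinuousOn (fun x => fderiv ℝ f x x) s :=
  (hf.continuousOn_fderiv_of_isOpen hs le_rfl).clm_apply continuousOn_id

section Integral

variable {R : ℝ} {u h₁ h₂ : E2 → ℝ}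

lemma continuousOn_sinhPotential {s : Set E2} (hu : ContinuousOn u s) (hh₁ : ContinuousOn h₁ s)
    (hh₂ : ContinuousOn h₂ s) : ContinuousOn (sinhPotential u h₁ h₂) s := by
  unfold sinhPotential
  fun_prop

lemma continuousOn_pohozaevDensity (hu : ContinuousOn u (ball 0 R))
    (hh₁ : ContDiffOn ℝ 1 h₁ (ball 0 R)) (hh₂ : ContDiffOn ℝ 1 h₂ (ball 0 R)) :
    ContinuousOn (pohozaevDensity u h₁ h₂) (ball 0 R) := by
  have := hh₁.continuousOn_fderiv_apply_self isOpen_ball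
  have := hh₂.continuousOn_fderiv_apply_self isOpen_ball
  have := continuousOn_sinhPotential hu hh₁.continuousOn hh₂.continuousOn
  unfold pohozaevDensity
  fun_prop

lemma integral_polarRectangle_divergence {P Q : ℝ × ℝ → ℝ} {r : ℝ} (hr : 0 ≤ r)
    (hP : ∀ z ∈ Icc (0, -π) (r, π), DifferentiableAt ℝ P z)
    (hQ : ∀ z ∈ Icc (0, -π) (r, π), DifferentiableAt ℝ Q z)
    (hint : IntegrableOn (fun z => fderiv ℝ P z (1, 0) + fderiv ℝ Q z (0, 1)) (Icc (0, -π) (r, π)))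
    (hP₀ : ∀ θ, P (0, θ) = 0) (hQπ : ∀ ρ, Q (ρ, π) = Q (ρ, -π)) :
    ∫ z in Icc (0, -π) (r, π), fderiv ℝ P z (1, 0) + fderiv ℝ Q z (0, 1) =
      ∫ θ in -π..π, P (r, θ) := by
  have hinterior : Ioo 0 r ×ˢ Ioo (-π) π ⊆ Icc (0, -π) (r, π) := by
    rw [Icc_prod_eq]
    exact prod_mono Ioo_subset_Icc_self Ioo_subset_Icc_self
  rw [integral_divergence_prod_Icc_of_hasFDerivAt_of_le _ _ _ _ (0, -π) (r, π)
      ⟨hr, by linarith [pi_pos]⟩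
      (fun z hz => (hP z hz).continuousAt.continuousWithinAt)
      (fun z hz => (hQ z hz).continuousAt.continuousWithinAt)
      (fun z hz => (hP z (hinterior hz)).hasFDerivAt)
      (fun z hz => (hQ z (hinterior hz)).hasFDerivAt) hint]
  simp only [hQπ, hP₀, sub_self, zero_add, intervalIntegral.integral_zero, sub_zero]

lemma integral_polar_pohozaevDensity (hu : ContDiffOn ℝ 2 u (ball 0 R))
    (hh₁ : ContDiffOn ℝ 1 h₁ (ball 0 R)) (hh₂ : ContDiffOn ℝ 1 h₂ (ball 0 R))
    (heq : ∀ x ∈ ball (0 : E2) R,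
      lap u x + h₁ x * exp (u x) - h₂ x * exp (-(u x)) = 0)
    {r : ℝ} (hr : 0 ≤ r) (hrR : r < R) :
    ∫ z in Icc (0, -π) (r, π), z.1 * pohozaevDensity u h₁ h₂ (circ z.1 z.2) =
      ∫ θ in (0 : ℝ)..2 * π, pohozaevRadialFlux u h₁ h₂ (r, θ) := by
  have hnhds : ∀ z ∈ Icc ((0 : ℝ), -π) (r, π), ball (0 : E2) R ∈ 𝓝 (circ z.1 z.2) :=
    fun z hz => isOpen_ball.mem_nhds
      (circ_mem_ball (by rw [abs_of_nonneg hz.1.1]; exact hz.2.1.trans_lt hrR) z.2)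
  have hu' : ∀ z ∈ Icc ((0 : ℝ), -π) (r, π), ContDiffAt ℝ 2 u (circ z.1 z.2) :=
    fun z hz => hu.contDiffAt (hnhds z hz)
  have hh₁' : ∀ z ∈ Icc ((0 : ℝ), -π) (r, π), DifferentiableAt ℝ h₁ (circ z.1 z.2) :=
    fun z hz => (hh₁.contDiffAt (hnhds z hz)).differentiableAt one_ne_zero
  have hh₂' : ∀ z ∈ Icc ((0 : ℝ), -π) (r, π), DifferentiableAt ℝ h₂ (circ z.1 z.2) :=
    fun z hz => (hh₂.contDiffAt (hnhds z hz)).differentiableAt one_ne_zero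
  have hdiv : EqOn (fun z => fderiv ℝ (pohozaevRadialFlux u h₁ h₂) z (1, 0) +
      fderiv ℝ (rellichAngularFlux u) z (0, 1))
      (fun z => z.1 * pohozaevDensity u h₁ h₂ (circ z.1 z.2)) (Icc (0, -π) (r, π)) :=
    fun z hz => pohozaev_polar (hu' z hz) (hh₁' z hz) (hh₂' z hz)
      (heq _ (mem_of_mem_nhds (hnhds z hz)))
  have hint : IntegrableOn (fun z : ℝ × ℝ => z.1 * pohozaevDensity u h₁ h₂ (circ z.1 z.2))
      (Icc (0, -π) (r, π)) :=
    (continuousOn_fst.mul ((continuousOn_pohozaevDensity hu.continuousOn hh₁ hh₂).comp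
      continuous_circ.continuousOn fun z hz => mem_of_mem_nhds (hnhds z hz))).integrableOn_compact
      isCompact_Icc
  have hshift := (periodic_pohozaevRadialFlux u h₁ h₂ r).intervalIntegral_add_eq (-π) 0
  rw [zero_add, show -π + 2 * π = π by ring] at hshift
  rw [← setIntegral_congr_fun measurableSet_Icc hdiv, ← hshift,
    integral_polarRectangle_divergence hr
      (fun z hz => differentiableAt_pohozaevRadialFlux (hu' z hz) (hh₁' z hz) (hh₂' z hz))
      (fun z hz => differentiableAt_rellichAngularFlux
        (((hu' z hz).fderiv_right (m := 1) le_rfl).differentiableAt one_ne_zero))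
      (hint.congr_fun hdiv.symm measurableSet_Icc) (pohozaevRadialFlux_zero u h₁ h₂)
      (fun ρ => by simpa [neg_add_eq_sub, two_mul] using periodic_rellichAngularFlux u ρ (-π))]

lemma integral_pohozaevDensity (hu : ContinuousOn u (ball 0 R))
    (hh₁ : ContDiffOn ℝ 1 h₁ (ball 0 R)) (hh₂ : ContDiffOn ℝ 1 h₂ (ball 0 R)) {r : ℝ}
    (hrR : r < R) :
    ∫ x in ball (0 : E2) r, pohozaevDensity u h₁ h₂ x =
      (∫ x in ball (0 : E2) r, fderiv ℝ h₁ x x * exp (u x)) +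
        (∫ x in ball (0 : E2) r, fderiv ℝ h₂ x x * exp (-(u x))) +
        2 * (∫ x in ball (0 : E2) r, (h₁ x * exp (u x) + h₂ x * exp (-(u x)))) := by
  have hintegrable : ∀ g : E2 → ℝ, ContinuousOn g (ball 0 R) → IntegrableOn g (ball 0 r) :=
    fun g hg => ((hg.mono (closedBall_subset_ball hrR)).integrableOn_compact
      (isCompact_closedBall _ _)).mono_set ball_subset_closedBall
  have hexp : ContinuousOn (fun x => exp (u x)) (ball 0 R) := by fun_prop
  have hexp_neg : ContinuousOn (fun x => exp (-(u x))) (ball 0 R) := by fun_prop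
  have hint₁ := hintegrable (fun x => fderiv ℝ h₁ x x * exp (u x))
    ((hh₁.continuousOn_fderiv_apply_self isOpen_ball).mul hexp)
  have hint₂ := hintegrable (fun x => fderiv ℝ h₂ x x * exp (-(u x)))
    ((hh₂.continuousOn_fderiv_apply_self isOpen_ball).mul hexp_neg)
  have hint₁₂ : IntegrableOn (fun x => fderiv ℝ h₁ x x * exp (u x) +
      fderiv ℝ h₂ x x * exp (-(u x))) (ball 0 r) := hint₁.add hint₂
  have hint₃ : IntegrableOn (fun x => 2 * (h₁ x * exp (u x) + h₂ x * exp (-(u x)))) (ball 0 r) :=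
    (hintegrable _ (continuousOn_sinhPotential hu hh₁.continuousOn hh₂.continuousOn)).const_mul 2
  rw [← integral_add hint₁ hint₂, ← integral_const_mul, ← integral_add hint₁₂ hint₃]
  rfl

lemma integral_pohozaevRadialFlux (hu : ContDiffOn ℝ 1 u (ball 0 R))
    (hh₁ : ContinuousOn h₁ (ball 0 R)) (hh₂ : ContinuousOn h₂ (ball 0 R)) {r : ℝ} (hr : |r| < R) :
    ∫ θ in (0 : ℝ)..2 * π, pohozaevRadialFlux u h₁ h₂ (r, θ) =
      r * (r * ∫ θ in (0 : ℝ)..2 * π,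
        (h₁ (circ r θ) * exp (u (circ r θ)) +
          h₂ (circ r θ) * exp (-(u (circ r θ))))) +
      r * (r * ∫ θ in (0 : ℝ)..2 * π,
        ((fderiv ℝ u (circ r θ) (circ 1 θ)) ^ 2 -
          1 / 2 * ‖fderiv ℝ u (circ r θ)‖ ^ 2)) := by
  have hmem : ∀ θ, circ r θ ∈ ball (0 : E2) R := circ_mem_ball hr
  have hpot := (continuousOn_sinhPotential hu.continuousOn hh₁ hh₂).comp_continuous
    (continuous_circ_angle r) hmem
  have hgrad : Continuous fun θ => fderiv ℝ u (circ r θ) :=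
    (hu.continuousOn_fderiv_of_isOpen isOpen_ball le_rfl).comp_continuous
      (continuous_circ_angle r) hmem
  have hdirection := continuous_circ_angle 1
  simp only [pohozaevRadialFlux_eq]
  rw [intervalIntegral.integral_add, intervalIntegral.integral_const_mul,
    intervalIntegral.integral_const_mul]
  · simp only [sinhPotential]
    ring
  · exact (hpot.const_mul _).intervalIntegrable _ _
  · exact Continuous.intervalIntegrable (by fun_prop) _ _

end Integral

/-- Boundary integrals over `∂B_r` are computed via the arc-length parametrization
`θ ↦ circ r θ`, so that `∫_{∂B_r} g dσ = r ∫_0^{2π} g (circ r θ) dθ`, and the outward unit normal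
at `circ r θ` is `circ 1 θ`. -/
theorem pohozaev_identity_general (R : ℝ) (u h₁ h₂ : E2 → ℝ)
    (hu : ContDiffOn ℝ 2 u (ball 0 R))
    (hh₁ : ContDiffOn ℝ 1 h₁ (ball 0 R)) (hh₂ : ContDiffOn ℝ 1 h₂ (ball 0 R))
    (heq : ∀ x ∈ ball (0:E2) R,
      lap u x + h₁ x * Real.exp (u x) - h₂ x * Real.exp (-(u x)) = 0)
    (r : ℝ) (hr : 0 < r) (hrR : r < R) :
    (∫ x in ball (0:E2) r, (fderiv ℝ h₁ x x) * Real.exp (u x)) +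
      (∫ x in ball (0:E2) r, (fderiv ℝ h₂ x x) * Real.exp (-(u x))) +
      2 * (∫ x in ball (0:E2) r, (h₁ x * Real.exp (u x) + h₂ x * Real.exp (-(u x)))) =
    r * (r * ∫ θ in (0:ℝ)..(2 * Real.pi),
        (h₁ (circ r θ) * Real.exp (u (circ r θ)) +
          h₂ (circ r θ) * Real.exp (-(u (circ r θ))))) +
      r * (r * ∫ θ in (0:ℝ)..(2 * Real.pi),
        ((fderiv ℝ u (circ r θ) (circ 1 θ))^2 -
          (1/2) * ‖fderiv ℝ u (circ r θ)‖^2)) := by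
  rw [← integral_pohozaevDensity hu.continuousOn hh₁ hh₂ hrR, integral_ball_eq_integral_polar,
    integral_polar_pohozaevDensity hu hh₁ hh₂ heq hr.le hrR,
    integral_pohozaevRadialFlux (hu.of_le one_le_two) hh₁.continuousOn hh₂.continuousOn
      (by rwa [abs_of_pos hr])]

/-- formula (3.6): Pohozaev-type identity for the sinh-Gordon equation.
Boundary integrals over `∂B_r` are computed via arc-length parametrization
`θ ↦ (r cos θ, r sin θ)`, so that `∫_{∂B_r} g dσ = r ∫_0^{2π} g(r cos θ, r sin θ) dθ`, and
the outward unit normal at `(r cos θ, r sin θ)` is `(cos θ, sin θ)`. -/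
theorem pohozaev_identity (R : ℝ) (hR : 0 < R) (u h₁ h₂ : E2 → ℝ)
    (hu : ContDiffOn ℝ 2 u (ball 0 R))
    (hh₁ : ContDiffOn ℝ 1 h₁ (ball 0 R)) (hh₂ : ContDiffOn ℝ 1 h₂ (ball 0 R))
    (heq : ∀ x ∈ ball (0:E2) R,
      lap u x + h₁ x * Real.exp (u x) - h₂ x * Real.exp (-(u x)) = 0)
    (r : ℝ) (hr : 0 < r) (hrR : r < R) :
    (∫ x in ball (0:E2) r, (fderiv ℝ h₁ x x) * Real.exp (u x)) +
      (∫ x in ball (0:E2) r, (fderiv ℝ h₂ x x) * Real.exp (-(u x))) +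
      2 * (∫ x in ball (0:E2) r, (h₁ x * Real.exp (u x) + h₂ x * Real.exp (-(u x)))) =
    r * (r * ∫ θ in (0:ℝ)..(2 * Real.pi),
        (h₁ (circ r θ) * Real.exp (u (circ r θ)) +
          h₂ (circ r θ) * Real.exp (-(u (circ r θ))))) +
      r * (r * ∫ θ in (0:ℝ)..(2 * Real.pi),
        ((fderiv ℝ u (circ r θ) (circ 1 θ))^2 -
          (1/2) * ‖fderiv ℝ u (circ r θ)‖^2)) :=
  pohozaev_identity_general R u h₁ h₂ hu hh₁ hh₂ heq r hr hrR
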